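/- arXiv:1707.02628 — 4 statements merged into one kernel-verified Lean document; each statement's English description precedes it below -/
import Mathlib

section
/- Let b ≥ 2 be an integer, let h and N be positive integers with N ≥ h, and let ε > 0 be real. Then for all integers M ≥ 0 and a with 0 ≤ a < b^h, μ({x ∈ (0,1) : F(M, N, a·b^{−h}, (a+1)·b^{−h}, ({b^j x})_{j≥0}) > ε·√(hN)}) ≤ 2h·exp(−ε² / (2·b^{−h}(1 − b^{−h}) + (2/3)·ε·⌊N/h⌋^{−1/2})). -/
/-!
Split the window `M ≤ j < M + N` into the `h` residue classes modulo `h`. Inside one class the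
indices are at least `h` apart, so the events `{b^j x} ∈ [a b^{-h}, (a+1) b^{-h})` are read off
disjoint blocks of `h` base-`b` digits of `x`: they are independent with probability
`p = b^{-h}`, and the number of hits in a class of size `m` is binomial `(m, p)`. The classes
themselves are dependent, but Hölder's inequality bounds the exponential moment of the total
count by the geometric mean of the `h` class moments. Bennett's estimate
`p eᵘ + 1 - p ≤ exp (p u + p (1-p) (eᵘ - 1 - u))`, the bound
`eᵘ - 1 - u ≤ u² / (2 (1 - u/3))` and the choice `u = t / (V + t/3)` give, for each sign, the
Bernstein tail `exp (-t² / (2 (V + t/3)) / h)` with `V = p (1-p) N`, and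
`√⌊N/h⌋ · √(hN) ≤ N` turns it into the stated bound.
-/

open scoped Classical

/-- `F M N α₁ α₂ x = |#{j : M ≤ j < M+N, α₁ ≤ x_j < α₂} − (α₂ − α₁)·N|`. -/
noncomputable def F (M N : ℕ) (α₁ α₂ : ℝ) (x : ℕ → ℝ) : ℝ :=
  |(((Finset.Ico M (M + N)).filter fun j => α₁ ≤ x j ∧ x j < α₂).card : ℝ) -
    (α₂ - α₁) * N|

/-- The sequence `({b^j x})_{j ≥ 0}` of fractional parts. -/
noncomputable def bseq (b : ℕ) (x : ℝ) : ℕ → ℝ := fun j => Int.fract ((b : ℝ) ^ j * x)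

open MeasureTheory Finset Real

section Digits

variable {b : ℕ}

theorem natFloor_pow_mul_eq_div (hb : 0 < b) (x : ℝ) {k J : ℕ} (hk : k ≤ J) :
    ⌊(b : ℝ) ^ k * x⌋₊ = ⌊(b : ℝ) ^ J * x⌋₊ / b ^ (J - k) := by
  rw [← Nat.floor_div_natCast]
  congr 1
  have hJ : (b : ℝ) ^ J = (b : ℝ) ^ k * (b : ℝ) ^ (J - k) := by
    rw [← pow_add, Nat.add_sub_cancel' hk]
  have : (b : ℝ) ^ (J - k) ≠ 0 := by positivity
  push_cast
  rw [hJ]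
  field_simp

theorem natFloor_pow_mul_fract (hb : 0 < b) {x : ℝ} (hx : 0 ≤ x) (j h : ℕ) :
    ⌊(b : ℝ) ^ h * Int.fract ((b : ℝ) ^ j * x)⌋₊ = ⌊(b : ℝ) ^ (j + h) * x⌋₊ % b ^ h := by
  set n := ⌊(b : ℝ) ^ (j + h) * x⌋₊
  have hq : ⌊(b : ℝ) ^ j * x⌋₊ = n / b ^ h := by
    rw [natFloor_pow_mul_eq_div hb x (Nat.le_add_right j h), Nat.add_sub_cancel_left]
  have hfract : Int.fract ((b : ℝ) ^ j * x) = (b : ℝ) ^ j * x - (n / b ^ h : ℕ) := by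
    rw [← hq, natCast_floor_eq_intCast_floor (by positivity), Int.self_sub_floor]
  have hdiv : ((b ^ h * (n / b ^ h) + n % b ^ h : ℕ) : ℝ) = n := by rw [Nat.div_add_mod]
  have hn := Nat.floor_le (a := (b : ℝ) ^ (j + h) * x) (by positivity)
  have hn' := Nat.lt_floor_add_one ((b : ℝ) ^ (j + h) * x)
  rw [Nat.floor_eq_iff (mul_nonneg (by positivity) (Int.fract_nonneg _)), hfract, mul_sub,
    ← mul_assoc, ← pow_add, add_comm h j]
  push_cast at hdiv
  constructor <;> linarith

theorem div_le_and_lt_div_iff_natFloor_eq {c y : ℝ} (hc : 0 < c) (hy : 0 ≤ y) (a : ℕ) :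
    ((a : ℝ) / c ≤ y ∧ y < ((a : ℝ) + 1) / c) ↔ ⌊c * y⌋₊ = a := by
  rw [Nat.floor_eq_iff (by positivity), div_le_iff₀' hc, lt_div_iff₀' hc]

theorem sum_range_mul {M : Type*} [AddCommMonoid M] (f : ℕ → M) (m n : ℕ) :
    ∑ t ∈ range (m * n), f t = ∑ q ∈ range m, ∑ s ∈ range n, f (n * q + s) := by
  induction m with
  | zero => simp
  | succ m ih =>
    rw [sum_range_succ, ← ih, Nat.succ_mul, sum_range_add]
    simp only [mul_comm n m]

variable {R : Type*} [CommSemiring R] {h : ℕ} (w : ℕ → R)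

-- For `n < b ^ J`, `n / b ^ (J - j - h) % b ^ h` is the block of base-`b` digits of `n` in
-- positions `j + 1, …, j + h` counted from the top; for `n = ⌊b ^ J x⌋₊` these are digits of `x`.
theorem sum_range_pow_succ_prod_digitBlock (hb : 0 < b) {J : ℕ} {T : Finset ℕ}
    (hT : ∀ j ∈ T, j + h ≤ J) :
    ∑ n ∈ range (b ^ (J + 1)), ∏ j ∈ T, w (n / b ^ (J + 1 - j - h) % b ^ h) =
      b * ∑ n ∈ range (b ^ J), ∏ j ∈ T, w (n / b ^ (J - j - h) % b ^ h) := by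
  rw [pow_succ, sum_range_mul, mul_sum]
  refine sum_congr rfl fun q _ => ?_
  have hdigit : ∀ s ∈ range b, ∏ j ∈ T, w ((b * q + s) / b ^ (J + 1 - j - h) % b ^ h) =
      ∏ j ∈ T, w (q / b ^ (J - j - h) % b ^ h) := fun s hs => prod_congr rfl fun j hj => by
    have hJ : J + 1 - j - h = 1 + (J - j - h) := by have := hT j hj; omega
    rw [hJ, pow_add, pow_one, ← Nat.div_div_eq_div_mul, Nat.mul_add_div hb,
      Nat.div_eq_of_lt (mem_range.mp hs), add_zero]
  rw [sum_congr rfl hdigit, sum_const, card_range, nsmul_eq_mul]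

theorem sum_range_pow_add_prod_digitBlock_insert (hb : 0 < b) (hh : 0 < h) {J : ℕ} {T : Finset ℕ}
    (hT : ∀ j ∈ T, j + h ≤ J) :
    ∑ n ∈ range (b ^ (J + h)), ∏ j ∈ insert J T, w (n / b ^ (J + h - j - h) % b ^ h) =
      (∑ d ∈ range (b ^ h), w d) *
        ∑ n ∈ range (b ^ J), ∏ j ∈ T, w (n / b ^ (J - j - h) % b ^ h) := by
  have hJT : J ∉ T := fun hJ => by have := hT J hJ; omega
  rw [pow_add, sum_range_mul, mul_sum]
  refine sum_congr rfl fun q _ => ?_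
  rw [sum_mul]
  refine sum_congr rfl fun s hs => ?_
  have hs : s < b ^ h := mem_range.mp hs
  rw [prod_insert hJT, Nat.add_sub_cancel_left, Nat.sub_self, pow_zero, Nat.div_one,
    Nat.mul_add_mod_self_left, Nat.mod_eq_of_lt hs]
  congr 1
  refine prod_congr rfl fun j hj => ?_
  have hJ : J + h - j - h = h + (J - j - h) := by have := hT j hj; omega
  rw [hJ, pow_add, ← Nat.div_div_eq_div_mul, Nat.mul_add_div (by positivity),
    Nat.div_eq_of_lt hs, add_zero]

theorem pow_mul_sum_range_prod_digitBlock (hb : 0 < b) (hh : 0 < h) (J : ℕ) (T : Finset ℕ)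
    (hT : ∀ j ∈ T, j + h ≤ J) (hsep : ∀ j ∈ T, ∀ j' ∈ T, j < j' → j + h ≤ j') :
    ((b : R) ^ h) ^ #T * ∑ n ∈ range (b ^ J), ∏ j ∈ T, w (n / b ^ (J - j - h) % b ^ h) =
      (b : R) ^ J * (∑ d ∈ range (b ^ h), w d) ^ #T := by
  induction J using Nat.strong_induction_on generalizing T with
  | _ J ih =>
  rcases T.eq_empty_or_nonempty with rfl | hne
  · simp
  obtain ⟨jm, hjm, hmax⟩ : ∃ jm ∈ T, ∀ j ∈ T, j ≤ jm := ⟨T.max' hne, T.max'_mem hne, T.le_max'⟩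
  rcases (hT jm hjm).lt_or_eq with hlt | rfl
  · obtain ⟨J, rfl⟩ : ∃ J', J = J' + 1 := ⟨J - 1, by omega⟩
    have hT' : ∀ j ∈ T, j + h ≤ J := fun j hj => by have := hmax j hj; omega
    rw [sum_range_pow_succ_prod_digitBlock w hb hT', mul_left_comm,
      ih J (by omega) T hT' hsep, pow_succ]
    ring
  · have hT' : ∀ j ∈ T.erase jm, j + h ≤ jm := fun j hj =>
      hsep j (mem_of_mem_erase hj) jm hjm ((hmax j (mem_of_mem_erase hj)).lt_of_ne
        (ne_of_mem_erase hj))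
    have ih' := ih jm (by omega) _ hT' fun j hj j' hj' =>
      hsep j (mem_of_mem_erase hj) j' (mem_of_mem_erase hj')
    rw [← insert_erase hjm, sum_range_pow_add_prod_digitBlock_insert w hb hh hT',
      card_insert_of_notMem (notMem_erase jm T)]
    calc ((b : R) ^ h) ^ (#(T.erase jm) + 1) * ((∑ d ∈ range (b ^ h), w d) *
          ∑ n ∈ range (b ^ jm), ∏ j ∈ T.erase jm, w (n / b ^ (jm - j - h) % b ^ h))
        = (b : R) ^ h * (∑ d ∈ range (b ^ h), w d) * (((b : R) ^ h) ^ #(T.erase jm) *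
          ∑ n ∈ range (b ^ jm), ∏ j ∈ T.erase jm, w (n / b ^ (jm - j - h) % b ^ h)) := by ring
      _ = _ := by rw [ih', pow_add]; ring

end Digits

theorem lintegral_Ico_natFloor_mul {B : ℕ} (hB : 0 < B) (g : ℕ → ENNReal) :
    ∫⁻ x in Set.Ico (0 : ℝ) 1, g ⌊(B : ℝ) * x⌋₊ = (∑ n ∈ range B, g n) * (B : ENNReal)⁻¹ := by
  have hB' : (0 : ℝ) < B := Nat.cast_pos.mpr hB
  have hpieces : ∀ m : ℕ, ∫⁻ x in Set.Ico (0 : ℝ) (m / B), g ⌊(B : ℝ) * x⌋₊ =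
      (∑ n ∈ range m, g n) * (B : ENNReal)⁻¹ := by
    intro m
    induction m with
    | zero => simp
    | succ m ih =>
      have hpiece : ∫⁻ x in Set.Ico ((m : ℝ) / B) ((m + 1 : ℕ) / B), g ⌊(B : ℝ) * x⌋₊ =
          g m * (B : ENNReal)⁻¹ := by
        rw [setLIntegral_congr_fun measurableSet_Ico (g := fun _ => g m), setLIntegral_const,
          Real.volume_Ico, Nat.cast_succ, ← sub_div, add_sub_cancel_left,
          ENNReal.ofReal_div_of_pos hB', ENNReal.ofReal_one, ENNReal.ofReal_natCast, one_div]
        intro x hx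
        rw [Set.mem_Ico, div_le_iff₀' hB', lt_div_iff₀' hB', Nat.cast_succ] at hx
        dsimp only
        rw [(Nat.floor_eq_iff ((Nat.cast_nonneg m).trans hx.1)).mpr hx]
      rw [← Set.Ico_union_Ico_eq_Ico (b := (m : ℝ) / B) (by positivity)
          (div_le_div_of_nonneg_right (by norm_num) hB'.le),
        lintegral_union measurableSet_Ico Set.Ico_disjoint_Ico_same, ih, hpiece, sum_range_succ,
        add_mul]
  simpa [hB'.ne'] using hpieces B

noncomputable def hitCount (b h a : ℕ) (T : Finset ℕ) (x : ℝ) : ℕ :=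
  #{j ∈ T | (a : ℝ) / (b : ℝ) ^ h ≤ bseq b x j ∧ bseq b x j < ((a : ℝ) + 1) / (b : ℝ) ^ h}

section Blocks

variable {b h a : ℕ}

theorem lintegral_prod_digitBlock (hb : 0 < b) (hh : 0 < h) {w : ℕ → ℝ} (hw : ∀ d, 0 ≤ w d)
    {T : Finset ℕ} (hsep : ∀ j ∈ T, ∀ j' ∈ T, j < j' → j + h ≤ j') :
    ∫⁻ x in Set.Ico (0 : ℝ) 1, ENNReal.ofReal (∏ j ∈ T, w ⌊(b : ℝ) ^ h * bseq b x j⌋₊) =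
      ENNReal.ofReal (((∑ d ∈ range (b ^ h), w d) / (b : ℝ) ^ h) ^ #T) := by
  set J := T.sup id + h
  have hT : ∀ j ∈ T, j + h ≤ J := fun j hj => Nat.add_le_add_right (le_sup (f := id) hj) h
  have hblock : ∀ x ∈ Set.Ico (0 : ℝ) 1, ∀ j ∈ T,
      ⌊(b : ℝ) ^ h * bseq b x j⌋₊ = ⌊((b ^ J : ℕ) : ℝ) * x⌋₊ / b ^ (J - j - h) % b ^ h :=
    fun x hx j hj => by
      rw [bseq, natFloor_pow_mul_fract hb hx.1, natFloor_pow_mul_eq_div hb x (hT j hj),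
        Nat.cast_pow, Nat.sub_sub]
  have hBJ : (0 : ℝ) < (b : ℝ) ^ J := by positivity
  have hprod : ∀ n, 0 ≤ ∏ j ∈ T, w (n / b ^ (J - j - h) % b ^ h) :=
    fun n => prod_nonneg fun j _ => hw _
  set g : ℕ → ENNReal := fun n => ENNReal.ofReal (∏ j ∈ T, w (n / b ^ (J - j - h) % b ^ h))
  have hg : Set.EqOn (fun x => ENNReal.ofReal (∏ j ∈ T, w ⌊(b : ℝ) ^ h * bseq b x j⌋₊))
      (fun x => g ⌊((b ^ J : ℕ) : ℝ) * x⌋₊) (Set.Ico 0 1) := fun x hx =>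
    congrArg ENNReal.ofReal (prod_congr rfl fun j hj => congrArg w (hblock x hx j hj))
  rw [setLIntegral_congr_fun measurableSet_Ico hg,
    lintegral_Ico_natFloor_mul (B := b ^ J) (by positivity),
    ← ENNReal.ofReal_sum_of_nonneg fun n _ => hprod n, Nat.cast_pow,
    ← ENNReal.ofReal_natCast, ← ENNReal.ofReal_pow (Nat.cast_nonneg _),
    ← ENNReal.ofReal_inv_of_pos hBJ, ← ENNReal.ofReal_mul (sum_nonneg fun n _ => hprod n)]
  congr 1
  have hcomb := pow_mul_sum_range_prod_digitBlock (R := ℝ) w hb hh J T hT hsep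
  have hbh : (b : ℝ) ^ h ≠ 0 := by positivity
  rw [div_pow, eq_div_iff (pow_ne_zero _ hbh), ← mul_comm (((b : ℝ) ^ h) ^ #T), ← mul_assoc,
    hcomb]
  field_simp

theorem hitCount_eq_card_natFloor_eq (hb : 0 < b) (T : Finset ℕ) (x : ℝ) :
    hitCount b h a T x = #{j ∈ T | ⌊(b : ℝ) ^ h * bseq b x j⌋₊ = a} := by
  unfold hitCount
  congr 1
  exact filter_congr fun j _ =>
    div_le_and_lt_div_iff_natFloor_eq (by positivity) (Int.fract_nonneg _) a

theorem lintegral_pow_hitCount (hb : 0 < b) (hh : 0 < h) (ha : a < b ^ h) {c : ℝ} (hc : 0 ≤ c)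
    {T : Finset ℕ} (hsep : ∀ j ∈ T, ∀ j' ∈ T, j < j' → j + h ≤ j') :
    ∫⁻ x in Set.Ico (0 : ℝ) 1, ENNReal.ofReal (c ^ hitCount b h a T x) =
      ENNReal.ofReal ((((b : ℝ) ^ h)⁻¹ * c + (1 - ((b : ℝ) ^ h)⁻¹)) ^ #T) := by
  set w : ℕ → ℝ := fun d => if d = a then c else 1
  have hpow : ∀ x, c ^ hitCount b h a T x = ∏ j ∈ T, w ⌊(b : ℝ) ^ h * bseq b x j⌋₊ := fun x => by
    rw [hitCount_eq_card_natFloor_eq hb, prod_ite, prod_const, prod_const_one, mul_one]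
  have hw : ∑ d ∈ range (b ^ h), w d = (b : ℝ) ^ h + (c - 1) := by
    have : ∀ d, w d = 1 + if d = a then c - 1 else 0 := fun d => by
      by_cases hd : d = a <;> simp [w, hd]
    simp only [this, sum_add_distrib, sum_const, card_range, nsmul_one, sum_ite_eq',
      mem_range.mpr ha, if_true, Nat.cast_pow]
  simp only [hpow]
  rw [lintegral_prod_digitBlock hb hh (fun d => by by_cases hd : d = a <;> simp [w, hd, hc]) hsep,
    hw]
  have : (b : ℝ) ^ h ≠ 0 := by positivity
  congr 2
  field_simp
  ring

end Blocks

theorem bernoulli_mgf_le {p u : ℝ} (hp0 : 0 ≤ p) (hp1 : p ≤ 1) (hu : 0 ≤ u) :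
    p * exp u + (1 - p) ≤ exp (p * u + p * (1 - p) * (exp u - 1 - u)) := by
  have hpos : ∀ y : ℝ, 0 < 1 + p * (exp y - 1) := fun y => by
    rcases hp0.eq_or_lt with rfl | hp
    · norm_num
    · nlinarith [mul_pos hp (exp_pos y)]
  set f : ℝ → ℝ := fun y => p * y + p * (1 - p) * (exp y - 1 - y) - log (1 + p * (exp y - 1))
  have hf' : ∀ y, HasDerivAt f (p + p * (1 - p) * (exp y - 1) -
      p * exp y / (1 + p * (exp y - 1))) y := fun y => by
    have he := hasDerivAt_exp y
    have hlog := (((he.sub_const 1).const_mul p).const_add 1).log (hpos y).ne'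
    exact (((hasDerivAt_id y).const_mul p).add
      (((he.sub_const 1).sub (hasDerivAt_id y)).const_mul (p * (1 - p)))).sub hlog |>.congr_deriv
      (by simp)
  have hmono : Monotone f := monotone_of_deriv_nonneg (fun y => (hf' y).differentiableAt)
    fun y => by
      rw [(hf' y).deriv]
      have key : p + p * (1 - p) * (exp y - 1) - p * exp y / (1 + p * (exp y - 1)) =
          p * p * (1 - p) * (exp y - 1) ^ 2 / (1 + p * (exp y - 1)) := by
        field_simp [(hpos y).ne']
        ring
      rw [key]
      exact div_nonneg (mul_nonneg (by nlinarith) (sq_nonneg _)) (hpos y).le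
  have hfu : f 0 ≤ f u := hmono hu
  simp only [f, exp_zero, sub_self, mul_zero, add_zero, log_one] at hfu
  calc p * exp u + (1 - p) = exp (log (1 + p * (exp u - 1))) := by rw [exp_log (hpos u)]; ring
    _ ≤ _ := exp_le_exp.mpr (by linarith)

theorem exp_neg_mul_bernoulli_mgf_le {p u θ : ℝ} (hp0 : 0 ≤ p) (hp1 : p ≤ 1) (hu : 0 ≤ u)
    (hθ : θ = 1 ∨ θ = -1) :
    exp (-(u * θ * p)) * (p * exp (u * θ) + (1 - p)) ≤ exp (p * (1 - p) * (exp u - 1 - u)) := by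
  rcases hθ with rfl | rfl
  · calc exp (-(u * 1 * p)) * (p * exp (u * 1) + (1 - p))
        ≤ exp (-(u * p)) * exp (p * u + p * (1 - p) * (exp u - 1 - u)) := by
          simp only [mul_one]
          gcongr
          exact bernoulli_mgf_le hp0 hp1 hu
      _ = _ := by rw [← exp_add]; ring_nf
  · -- swapping `p` and `1 - p` turns the lower tail into the upper one
    have hswap := bernoulli_mgf_le (p := 1 - p) (by linarith) (by linarith) hu
    calc exp (-(u * -1 * p)) * (p * exp (u * -1) + (1 - p))
        = exp (-(u * (1 - p))) * ((1 - p) * exp u + (1 - (1 - p))) := by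
          rw [show -(u * (1 - p)) = -u + u * p by ring, exp_add, show u * -1 = -u by ring,
            show -(-u * p) = u * p by ring, exp_neg]
          field_simp
          ring
      _ ≤ exp (-(u * (1 - p))) * exp ((1 - p) * u + (1 - p) * (1 - (1 - p)) * (exp u - 1 - u)) := by
          gcongr
      _ = _ := by rw [← exp_add]; ring_nf

theorem exp_sub_one_sub_le {u : ℝ} (hu0 : 0 ≤ u) (hu3 : u < 3) :
    exp u - 1 - u ≤ u ^ 2 / (2 * (1 - u / 3)) := by
  have hexp : HasSum (fun n => u ^ (n + 2) / (n + 2).factorial) (exp u - 1 - u) := by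
    have := (hasSum_nat_add_iff' 2).mpr (NormedSpace.expSeries_div_hasSum_exp u)
    simpa [sum_range_succ, ← exp_eq_exp_ℝ, sub_sub] using this
  have hgeom : HasSum (fun n => u ^ 2 / 2 * (u / 3) ^ n) (u ^ 2 / (2 * (1 - u / 3))) := by
    have := (hasSum_geometric_of_lt_one (r := u / 3) (by positivity) (by linarith)).mul_left
      (u ^ 2 / 2)
    rwa [← div_eq_mul_inv, div_div] at this
  refine hasSum_le (fun n => ?_) hexp hgeom
  have hfact : (2 * 3 ^ n : ℝ) ≤ (n + 2).factorial := by
    have := Nat.factorial_mul_pow_le_factorial (m := 2) (n := n)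
    rw [add_comm 2 n] at this
    exact_mod_cast this
  calc u ^ (n + 2) / (n + 2).factorial ≤ u ^ (n + 2) / (2 * 3 ^ n) :=
        div_le_div_of_nonneg_left (by positivity) (by positivity) hfact
    _ = _ := by rw [div_pow, pow_add]; field_simp

theorem exists_bernstein_exponent {V t : ℝ} (hV : 0 < V) (ht : 0 < t) :
    ∃ u, 0 ≤ u ∧ V * (exp u - 1 - u) - u * t ≤ -(t ^ 2 / (2 * (V + t / 3))) := by
  have hVt : 0 < V + t / 3 := by positivity
  set u := t / (V + t / 3) with hu
  have hu3 : u < 3 := by rw [div_lt_iff₀ hVt]; linarith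
  have hu13 : 1 - u / 3 = V / (V + t / 3) := by rw [hu]; field_simp; ring
  refine ⟨u, by positivity, ?_⟩
  calc V * (exp u - 1 - u) - u * t ≤ V * (u ^ 2 / (2 * (1 - u / 3))) - u * t := by
        gcongr
        exact exp_sub_one_sub_le (by positivity) hu3
    _ = _ := by rw [hu13, hu]; field_simp; ring

-- The summands may be dependent: Hölder's inequality with exponents `1 / #s` replaces
-- independence in the Chernoff bound.
theorem measure_lt_sum_le_exp {α ι : Type*} [MeasurableSpace α] (μ : Measure α) {s : Finset ι}
    (hs : s.Nonempty) {S : ι → α → ℝ} (hS : ∀ r ∈ s, Measurable (S r)) {u : ℝ} (hu : 0 ≤ u)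
    {K : ι → ℝ}
    (hK : ∀ r ∈ s, ∫⁻ x, ENNReal.ofReal (exp (u * S r x)) ∂μ ≤ ENNReal.ofReal (exp (K r)))
    (t : ℝ) :
    μ {x | t < ∑ r ∈ s, S r x} ≤ ENNReal.ofReal (exp ((∑ r ∈ s, K r - u * t) / #s)) := by
  set n : ℝ := (#s : ℝ)
  have hn : 0 < n := Nat.cast_pos.mpr hs.card_pos
  set f : ι → α → ENNReal := fun r x => ENNReal.ofReal (exp (u * S r x))
  have hf : ∀ r ∈ s, Measurable (f r) := fun r hr =>
    (measurable_exp.comp ((hS r hr).const_mul u)).ennreal_ofReal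
  have hprod : ∀ x, ENNReal.ofReal (exp (u / n * ∑ r ∈ s, S r x)) = ∏ r ∈ s, f r x ^ (1 / n) :=
    fun x => by
      simp only [f, ENNReal.ofReal_rpow_of_pos (exp_pos _), ← exp_mul,
        ← ENNReal.ofReal_prod_of_nonneg fun _ _ => (exp_pos _).le, ← exp_sum, mul_sum]
      congr 2
      exact sum_congr rfl fun r _ => by ring
  have hmarkov : ENNReal.ofReal (exp (u / n * t)) * μ {x | t < ∑ r ∈ s, S r x} ≤
      ∫⁻ x, ∏ r ∈ s, f r x ^ (1 / n) ∂μ := by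
    calc ENNReal.ofReal (exp (u / n * t)) * μ {x | t < ∑ r ∈ s, S r x}
        ≤ ENNReal.ofReal (exp (u / n * t)) *
          μ {x | ENNReal.ofReal (exp (u / n * t)) ≤ ∏ r ∈ s, f r x ^ (1 / n)} := by
          gcongr with x
          intro hx
          rw [← hprod]
          exact ENNReal.ofReal_le_ofReal (exp_le_exp.mpr (by gcongr))
      _ ≤ _ := mul_meas_ge_le_lintegral₀ (Finset.measurable_prod s fun r hr =>
          (hf r hr).pow_const _).aemeasurable _
  have hholder : ∫⁻ x, ∏ r ∈ s, f r x ^ (1 / n) ∂μ ≤ ∏ r ∈ s, (∫⁻ x, f r x ∂μ) ^ (1 / n) :=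
    ENNReal.lintegral_prod_norm_pow_le s (fun r hr => (hf r hr).aemeasurable)
      (by rw [sum_const, nsmul_eq_mul]; exact mul_one_div_cancel hn.ne') fun _ _ => by positivity
  have hbound :
      ∏ r ∈ s, (∫⁻ x, f r x ∂μ) ^ (1 / n) ≤ ENNReal.ofReal (exp ((∑ r ∈ s, K r) / n)) := by
    calc ∏ r ∈ s, (∫⁻ x, f r x ∂μ) ^ (1 / n) ≤ ∏ r ∈ s, ENNReal.ofReal (exp (K r)) ^ (1 / n) :=
          prod_le_prod' fun r hr => ENNReal.rpow_le_rpow (hK r hr) (by positivity)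
      _ = _ := by
          simp only [ENNReal.ofReal_rpow_of_pos (exp_pos _), ← exp_mul,
            ← ENNReal.ofReal_prod_of_nonneg fun _ _ => (exp_pos _).le, ← exp_sum, sum_div,
            mul_one_div]
  calc μ {x | t < ∑ r ∈ s, S r x}
      = ENNReal.ofReal (exp (-(u / n * t))) *
        (ENNReal.ofReal (exp (u / n * t)) * μ {x | t < ∑ r ∈ s, S r x}) := by
        rw [← mul_assoc, ← ENNReal.ofReal_mul (exp_pos _).le, ← exp_add, neg_add_cancel, exp_zero,
          ENNReal.ofReal_one, one_mul]
    _ ≤ ENNReal.ofReal (exp (-(u / n * t))) * ENNReal.ofReal (exp ((∑ r ∈ s, K r) / n)) := by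
        gcongr
        exact hmarkov.trans (hholder.trans hbound)
    _ = _ := by
        rw [← ENNReal.ofReal_mul (exp_pos _).le, ← exp_add]
        ring_nf

theorem add_le_of_mod_eq_of_lt {h j j' : ℕ} (hmod : j % h = j' % h) (hlt : j < j') :
    j + h ≤ j' := by
  have hj := Nat.div_add_mod j h
  have hj' := Nat.div_add_mod j' h
  have hq : j / h < j' / h := by
    by_contra hq
    nlinarith [Nat.mul_le_mul_left h (not_lt.mp hq)]
  nlinarith [Nat.mul_le_mul_left h (Nat.succ_le_of_lt hq)]

section HitCount

variable {b h a : ℕ}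

theorem hitCount_eq_sum_mod (hh : 0 < h) (s : Finset ℕ) (x : ℝ) :
    hitCount b h a s x = ∑ r ∈ range h, hitCount b h a {j ∈ s | j % h = r} x := by
  unfold hitCount
  rw [card_eq_sum_card_fiberwise fun j _ => mem_range.mpr (Nat.mod_lt j hh)]
  exact sum_congr rfl fun r _ => by rw [filter_comm]

theorem measurable_hitCount (T : Finset ℕ) : Measurable fun x => (hitCount b h a T x : ℝ) := by
  unfold hitCount
  simp_rw [card_filter]
  push_cast
  refine Finset.measurable_sum _ fun j _ => Measurable.ite ?_ measurable_const measurable_const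
  have hfract : Measurable fun x : ℝ => bseq b x j := by unfold bseq; fun_prop
  exact (measurableSet_le measurable_const hfract).inter (measurableSet_lt hfract measurable_const)

theorem lintegral_exp_mul_hitCount_sub_le (hb : 0 < b) (hh : 0 < h) (ha : a < b ^ h)
    {T : Finset ℕ} (hsep : ∀ j ∈ T, ∀ j' ∈ T, j < j' → j + h ≤ j') {θ u : ℝ}
    (hθ : θ = 1 ∨ θ = -1) (hu : 0 ≤ u) :
    ∫⁻ x in Set.Ico (0 : ℝ) 1, ENNReal.ofReal
        (exp (u * (θ * (hitCount b h a T x - ((b : ℝ) ^ h)⁻¹ * #T)))) ≤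
      ENNReal.ofReal (exp (((b : ℝ) ^ h)⁻¹ * (1 - ((b : ℝ) ^ h)⁻¹) * #T * (exp u - 1 - u))) := by
  set p : ℝ := ((b : ℝ) ^ h)⁻¹
  have hp0 : 0 ≤ p := by positivity
  have hp1 : p ≤ 1 := inv_le_one_of_one_le₀ (one_le_pow₀ (Nat.one_le_cast.mpr hb))
  have hsplit : ∀ x, ENNReal.ofReal (exp (u * (θ * (hitCount b h a T x - p * #T)))) =
      ENNReal.ofReal (exp (-(u * θ * p)) ^ #T) *
        ENNReal.ofReal (exp (u * θ) ^ hitCount b h a T x) := fun x => by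
    rw [← ENNReal.ofReal_mul (by positivity), ← exp_nat_mul, ← exp_nat_mul, ← exp_add]
    ring_nf
  simp only [hsplit]
  rw [lintegral_const_mul' _ _ ENNReal.ofReal_ne_top,
    lintegral_pow_hitCount hb hh ha (exp_pos _).le hsep, ← ENNReal.ofReal_mul (by positivity),
    ← mul_pow]
  refine ENNReal.ofReal_le_ofReal ?_
  calc (exp (-(u * θ * p)) * (p * exp (u * θ) + (1 - p))) ^ #T
      ≤ exp (p * (1 - p) * (exp u - 1 - u)) ^ #T :=
        pow_le_pow_left₀ (by positivity) (exp_neg_mul_bernoulli_mgf_le hp0 hp1 hu hθ) _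
    _ = _ := by rw [← exp_nat_mul]; ring_nf

theorem volume_lt_abs_hitCount_sub_le (hb : 0 < b) (hh : 0 < h) (ha : a < b ^ h) (M N : ℕ)
    {u : ℝ} (hu : 0 ≤ u) (t : ℝ) :
    volume {x ∈ Set.Ioo (0 : ℝ) 1 |
        t < |(hitCount b h a (Ico M (M + N)) x : ℝ) - ((b : ℝ) ^ h)⁻¹ * N|} ≤
      ENNReal.ofReal (2 * exp ((((b : ℝ) ^ h)⁻¹ * (1 - ((b : ℝ) ^ h)⁻¹) * N *
        (exp u - 1 - u) - u * t) / h)) := by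
  set p : ℝ := ((b : ℝ) ^ h)⁻¹
  set μ := volume.restrict (Set.Ico (0 : ℝ) 1) with hμ
  set T : ℕ → Finset ℕ := fun r => {j ∈ Ico M (M + N) | j % h = r}
  have hsep : ∀ r, ∀ j ∈ T r, ∀ j' ∈ T r, j < j' → j + h ≤ j' := fun r j hj j' hj' =>
    add_le_of_mod_eq_of_lt ((mem_filter.mp hj).2.trans (mem_filter.mp hj').2.symm)
  have hN : (N : ℝ) = ∑ r ∈ range h, (#(T r) : ℝ) := by
    rw [← Nat.cast_sum, ← card_eq_sum_card_fiberwise fun j _ => mem_range.mpr (Nat.mod_lt j hh),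
      Nat.card_Ico, Nat.add_sub_cancel_left]
  have hone_sided : ∀ θ : ℝ, θ = 1 ∨ θ = -1 →
      μ {x | t < θ * ((hitCount b h a (Ico M (M + N)) x : ℝ) - p * N)} ≤
        ENNReal.ofReal (exp ((p * (1 - p) * N * (exp u - 1 - u) - u * t) / h)) := fun θ hθ => by
    have hsum : ∀ x, θ * ((hitCount b h a (Ico M (M + N)) x : ℝ) - p * N) =
        ∑ r ∈ range h, θ * ((hitCount b h a (T r) x : ℝ) - p * #(T r)) := fun x => by
      rw [hitCount_eq_sum_mod hh, hN, Nat.cast_sum, mul_sum (range h), ← sum_sub_distrib,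
        mul_sum]
    simp only [hsum]
    refine (measure_lt_sum_le_exp μ (nonempty_range_iff.mpr hh.ne')
      (fun r _ => ((measurable_hitCount _).sub_const _).const_mul θ) hu
      (fun r _ => lintegral_exp_mul_hitCount_sub_le hb hh ha (hsep r) hθ hu) t).trans_eq ?_
    rw [card_range, ← sum_mul, ← mul_sum, ← hN]
  have hpos := hone_sided 1 (Or.inl rfl)
  have hneg := hone_sided (-1) (Or.inr rfl)
  simp only [one_mul, neg_one_mul] at hpos hneg
  calc volume {x ∈ Set.Ioo (0 : ℝ) 1 |
        t < |(hitCount b h a (Ico M (M + N)) x : ℝ) - p * N|}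
      ≤ μ {x | t < |(hitCount b h a (Ico M (M + N)) x : ℝ) - p * N|} := by
        rw [← Set.ofPred_inter_eq_sep, hμ, ← Measure.restrict_congr_set Ioo_ae_eq_Ico]
        exact Measure.le_restrict_apply _ _
    _ ≤ μ ({x | t < (hitCount b h a (Ico M (M + N)) x : ℝ) - p * N} ∪
        {x | t < -((hitCount b h a (Ico M (M + N)) x : ℝ) - p * N)}) :=
        measure_mono fun x hx => lt_abs.mp (show t < |_| from hx)
    _ ≤ μ {x | t < (hitCount b h a (Ico M (M + N)) x : ℝ) - p * N} +
        μ {x | t < -((hitCount b h a (Ico M (M + N)) x : ℝ) - p * N)} := measure_union_le _ _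
    _ ≤ _ := by
        rw [two_mul, ENNReal.ofReal_add (exp_pos _).le (exp_pos _).le]
        exact add_le_add hpos hneg

end HitCount

theorem F_eq_abs_hitCount_sub (b h a M N : ℕ) (x : ℝ) :
    F M N ((a : ℝ) / (b : ℝ) ^ h) (((a : ℝ) + 1) / (b : ℝ) ^ h) (bseq b x) =
      |(hitCount b h a (Ico M (M + N)) x : ℝ) - ((b : ℝ) ^ h)⁻¹ * N| := by
  rw [F, hitCount, ← sub_div, add_sub_cancel_left, one_div]

theorem bernstein_exponent_le {h N : ℕ} (hh : 0 < h) (hN : h ≤ N) {p ε : ℝ} (hp0 : 0 ≤ p)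
    (hp1 : p ≤ 1) (hε : 0 < ε) :
    -((ε * √(h * N)) ^ 2 / (2 * (p * (1 - p) * N + ε * √(h * N) / 3))) / h ≤
      -ε ^ 2 / (2 * p * (1 - p) + 2 / 3 * ε / √((N / h : ℕ) : ℝ)) := by
  have hNR : (0 : ℝ) < N := Nat.cast_pos.mpr (hh.trans_le hN)
  have hm : (0 : ℝ) < √((N / h : ℕ) : ℝ) :=
    sqrt_pos.mpr (Nat.cast_pos.mpr (Nat.div_pos hN hh))
  have hroot : √((N / h : ℕ) : ℝ) * √(h * N) ≤ N := by
    have hdiv : ((N / h : ℕ) : ℝ) * h ≤ N := by exact_mod_cast Nat.div_mul_le_self N h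
    calc √((N / h : ℕ) : ℝ) * √(h * N) = √((N / h : ℕ) * h * N) := by
          rw [← sqrt_mul (Nat.cast_nonneg _), mul_assoc]
      _ ≤ √(N * N) := sqrt_le_sqrt (mul_le_mul_of_nonneg_right hdiv hNR.le)
      _ = N := sqrt_mul_self hNR.le
  rw [neg_div, neg_div, neg_le_neg_iff, mul_pow, sq_sqrt (by positivity),
    div_div, div_le_div_iff₀ (by positivity) (by positivity)]
  have hden : ε * √(h * N) ≤ ε * N / √((N / h : ℕ) : ℝ) := by
    rw [le_div_iff₀ hm, mul_assoc, mul_comm (√(h * N))]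
    gcongr
  calc ε ^ 2 * (2 * (p * (1 - p) * N + ε * √(h * N) / 3) * h)
      ≤ ε ^ 2 * (2 * (p * (1 - p) * N + ε * N / √((N / h : ℕ) : ℝ) / 3) * h) := by gcongr
    _ = ε ^ 2 * (h * N) * (2 * p * (1 - p) + 2 / 3 * ε / √((N / h : ℕ) : ℝ)) := by ring

theorem stmt2 (b h N : ℕ) (hb : 2 ≤ b) (hh : 1 ≤ h) (hN : h ≤ N)
    (ε : ℝ) (hε : 0 < ε) (M a : ℕ) (ha : a < b ^ h) :
    MeasureTheory.volume {x ∈ Set.Ioo (0 : ℝ) 1 |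
        ε * Real.sqrt ((h : ℝ) * N) <
          F M N ((a : ℝ) / (b : ℝ) ^ h) (((a : ℝ) + 1) / (b : ℝ) ^ h) (bseq b x)} ≤
      ENNReal.ofReal (2 * h * Real.exp (-ε ^ 2 /
        (2 * ((b : ℝ) ^ h)⁻¹ * (1 - ((b : ℝ) ^ h)⁻¹) +
          2 / 3 * ε / Real.sqrt ((N / h : ℕ) : ℝ)))) := by
  set p : ℝ := ((b : ℝ) ^ h)⁻¹
  have hbh : (1 : ℝ) < (b : ℝ) ^ h := one_lt_pow₀ (by exact_mod_cast hb) (by omega)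
  have hp0 : 0 < p := by positivity
  have hp1 : p < 1 := inv_lt_one_of_one_lt₀ hbh
  have hhR : (0 : ℝ) < h := by exact_mod_cast hh
  have hNR : (0 : ℝ) < N := by exact_mod_cast hh.trans hN
  obtain ⟨u, hu, hexp⟩ := exists_bernstein_exponent (V := p * (1 - p) * N)
    (t := ε * √(h * N)) (mul_pos (mul_pos hp0 (by linarith)) hNR)
    (mul_pos hε (sqrt_pos.mpr (mul_pos hhR hNR)))
  simp only [F_eq_abs_hitCount_sub]
  refine (volume_lt_abs_hitCount_sub_le (by omega) hh ha M N hu _).trans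
    (ENNReal.ofReal_le_ofReal ?_)
  have hexponent := (div_le_div_of_nonneg_right hexp (Nat.cast_nonneg h)).trans
    (bernstein_exponent_le hh hN hp0.le hp1.le hε)
  have hh1 : (1 : ℝ) ≤ h := by exact_mod_cast hh
  calc 2 * exp ((p * (1 - p) * N * (exp u - 1 - u) - u * (ε * √(h * N))) / h)
      ≤ 2 * 1 * exp (-ε ^ 2 / (2 * p * (1 - p) + 2 / 3 * ε / √((N / h : ℕ) : ℝ))) := by
        rw [mul_one]
        gcongr
    _ ≤ _ := by gcongr
end

section
/- Let b ≥ 2 be an integer. For any real α ∈ (0,1), any sequence (x_j)_{j≥0} of reals in [0,1), and any positive integers N and k, one has F(0, N, 0, α, (x_j)) ≤ N/b^k + Σ_{h=1}^{k} (b−1)·max_{0 ≤ a < b^h} F(0, N, a·b^{−h}, (a+1)·b^{−h}, (x_j)). -/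
open scoped Classical

lemma F_split (x : ℕ → ℝ) (N : ℕ) (hx : ∀ j, 0 ≤ x j) {β γ : ℝ} (hβγ : β ≤ γ) :
    F 0 N 0 γ x ≤ F 0 N 0 β x + F 0 N β γ x := by
  unfold F
  have hcard : (((Finset.Ico 0 (0+N)).filter fun j => (0:ℝ) ≤ x j ∧ x j < γ).card : ℝ)
      = (((Finset.Ico 0 (0+N)).filter fun j => (0:ℝ) ≤ x j ∧ x j < β).card : ℝ)
        + (((Finset.Ico 0 (0+N)).filter fun j => β ≤ x j ∧ x j < γ).card : ℝ) := by
    rw [← Nat.cast_add]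
    congr 1
    rw [← Finset.card_union_of_disjoint ?_]
    · congr 1
      ext j
      simp only [Finset.mem_filter, Finset.mem_union]
      constructor
      · rintro ⟨hj, h0, hγ'⟩
        rcases lt_or_ge (x j) β with h | h
        · exact Or.inl ⟨hj, h0, h⟩
        · exact Or.inr ⟨hj, h, hγ'⟩
      · rintro (⟨hj, h0, hβ'⟩ | ⟨hj, hβ', hγ'⟩)
        · exact ⟨hj, h0, hβ'.trans_le hβγ⟩
        · exact ⟨hj, hx j, hγ'⟩
    · simp only [Finset.disjoint_left, Finset.mem_filter]
      rintro j ⟨_, _, h1⟩ ⟨_, h2, _⟩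
      linarith
  rw [hcard]
  calc |(((Finset.Ico 0 (0+N)).filter fun j => (0:ℝ) ≤ x j ∧ x j < β).card : ℝ)
        + (((Finset.Ico 0 (0+N)).filter fun j => β ≤ x j ∧ x j < γ).card : ℝ) - (γ - 0) * N|
      = |((((Finset.Ico 0 (0+N)).filter fun j => (0:ℝ) ≤ x j ∧ x j < β).card : ℝ) - (β - 0) * N)
        + ((((Finset.Ico 0 (0+N)).filter fun j => β ≤ x j ∧ x j < γ).card : ℝ) - (γ - β) * N)| := by
        congr 1; ring
    _ ≤ _ := abs_add_le _ _

lemma F_chain (x : ℕ → ℝ) (N : ℕ) (hx : ∀ j, 0 ≤ x j) (c : ℝ) (hc : 0 ≤ c)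
    (n m : ℕ) (hnm : n ≤ m) :
    F 0 N 0 ((m : ℝ) * c) x ≤ F 0 N 0 ((n : ℝ) * c) x +
      ∑ i ∈ Finset.Ico n m, F 0 N ((i : ℝ) * c) (((i : ℝ) + 1) * c) x := by
  induction m, hnm using Nat.le_induction with
  | base => simp
  | succ m hnm ih =>
      have h1 : F 0 N 0 (((m:ℝ)+1) * c) x ≤ F 0 N 0 ((m:ℝ) * c) x
          + F 0 N ((m:ℝ) * c) (((m:ℝ)+1) * c) x :=
        F_split x N hx (by nlinarith)
      rw [Finset.sum_Ico_succ_top hnm]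
      push_cast
      push_cast at h1 ih
      linarith

lemma F_zero (x : ℕ → ℝ) (N : ℕ) : F 0 N 0 0 x = 0 := by
  unfold F
  have : ((Finset.Ico 0 (0+N)).filter fun j => (0:ℝ) ≤ x j ∧ x j < 0) = ∅ := by
    rw [Finset.filter_eq_empty_iff]
    rintro j _ ⟨h1, h2⟩
    linarith
  rw [this]
  simp

lemma F_one (x : ℕ → ℝ) (N : ℕ) (hx : ∀ j, x j ∈ Set.Ico (0:ℝ) 1) : F 0 N 0 1 x = 0 := by
  unfold F
  have : ((Finset.Ico 0 (0+N)).filter fun j => (0:ℝ) ≤ x j ∧ x j < 1) = Finset.Ico 0 (0+N) :=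
    Finset.filter_true_of_mem fun j _ => ⟨(hx j).1, (hx j).2⟩
  rw [this]
  simp

lemma F_key (b : ℕ) (hb : 2 ≤ b) (x : ℕ → ℝ) (N : ℕ) (hx : ∀ j, x j ∈ Set.Ico (0:ℝ) 1) :
    ∀ (k m : ℕ), m ≤ b ^ k →
    F 0 N 0 ((m : ℝ) / (b : ℝ) ^ k) x ≤ ∑ h ∈ Finset.Icc 1 k, ((b : ℝ) - 1) *
      ⨆ a : Fin (b ^ h), F 0 N ((a : ℝ) / (b : ℝ) ^ h) (((a : ℝ) + 1) / (b : ℝ) ^ h) x := by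
  have hb0 : (0:ℝ) < (b:ℝ) := by positivity
  intro k
  induction k with
  | zero =>
      intro m hm
      simp only [pow_zero] at hm ⊢
      interval_cases m
      · simp [F_zero x N]
      · simp [F_one x N hx]
  | succ k ih =>
      intro m hm
      set q := m / b with hq
      have hqr : b * q + m % b = m := Nat.div_add_mod m b
      have hr : m % b < b := Nat.mod_lt _ (by omega)
      have hqk : q ≤ b ^ k := by
        have h1 : m / b ≤ b ^ (k+1) / b := Nat.div_le_div_right hm
        rwa [pow_succ, Nat.mul_div_cancel _ (by omega : 0 < b)] at h1
      have hchain := F_chain x N (fun j => (hx j).1) (1 / (b:ℝ) ^ (k+1)) (by positivity)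
        (b * q) m (by omega)
      have e1 : (m : ℝ) * (1 / (b:ℝ) ^ (k+1)) = (m : ℝ) / (b:ℝ) ^ (k+1) := by ring
      have e2 : ((b * q : ℕ) : ℝ) * (1 / (b:ℝ) ^ (k+1)) = (q : ℝ) / (b:ℝ) ^ k := by
        push_cast
        rw [pow_succ]
        field_simp
      rw [e1, e2] at hchain
      -- bound the sum of interval terms
      set S := ⨆ a : Fin (b ^ (k+1)),
        F 0 N ((a : ℝ) / (b : ℝ) ^ (k+1)) (((a : ℝ) + 1) / (b : ℝ) ^ (k+1)) x with hS
      have hSnn : 0 ≤ S := Real.iSup_nonneg fun a => abs_nonneg _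
      have hsum : ∑ i ∈ Finset.Ico (b * q) m,
          F 0 N ((i : ℝ) * (1 / (b:ℝ) ^ (k+1))) (((i : ℝ) + 1) * (1 / (b:ℝ) ^ (k+1))) x
          ≤ ((b : ℝ) - 1) * S := by
        have hcard : (Finset.Ico (b * q) m).card = m % b := by
          rw [Nat.card_Ico]; omega
        have hterm : ∀ i ∈ Finset.Ico (b * q) m,
            F 0 N ((i : ℝ) * (1 / (b:ℝ) ^ (k+1))) (((i : ℝ) + 1) * (1 / (b:ℝ) ^ (k+1))) x ≤ S := by
          intro i hi
          rw [Finset.mem_Ico] at hi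
          have hib : i < b ^ (k+1) := lt_of_lt_of_le hi.2 hm
          rw [hS]
          have e3 : (i : ℝ) * (1 / (b:ℝ) ^ (k+1)) = (i : ℝ) / (b:ℝ) ^ (k+1) := by ring
          have e4 : ((i : ℝ) + 1) * (1 / (b:ℝ) ^ (k+1)) = ((i : ℝ) + 1) / (b:ℝ) ^ (k+1) := by
            ring
          rw [e3, e4]
          exact le_ciSup (f := fun a : Fin (b ^ (k+1)) =>
            F 0 N ((a : ℝ) / (b : ℝ) ^ (k+1)) (((a : ℝ) + 1) / (b : ℝ) ^ (k+1)) x)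
            (Set.Finite.bddAbove (Set.finite_range _)) ⟨i, hib⟩
        calc ∑ i ∈ Finset.Ico (b * q) m,
            F 0 N ((i : ℝ) * (1 / (b:ℝ) ^ (k+1))) (((i : ℝ) + 1) * (1 / (b:ℝ) ^ (k+1))) x
            ≤ (Finset.Ico (b * q) m).card • S := Finset.sum_le_card_nsmul _ _ _ hterm
          _ = ((m % b : ℕ) : ℝ) * S := by rw [hcard, nsmul_eq_mul]
          _ ≤ ((b : ℝ) - 1) * S := by
              apply mul_le_mul_of_nonneg_right _ hSnn
              have : ((m % b : ℕ) : ℝ) ≤ (b : ℝ) - 1 := by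
                have : (m % b : ℕ) ≤ b - 1 := by omega
                calc ((m % b : ℕ) : ℝ) ≤ ((b - 1 : ℕ) : ℝ) := by exact_mod_cast this
                  _ = (b : ℝ) - 1 := by push_cast [Nat.cast_sub (by omega : 1 ≤ b)]; ring
              exact this
      rw [Finset.sum_Icc_succ_top (by omega : 1 ≤ k + 1)]
      have hIH := ih q hqk
      calc F 0 N 0 ((m : ℝ) / (b:ℝ) ^ (k+1)) x
          ≤ F 0 N 0 ((q : ℝ) / (b:ℝ) ^ k) x + ∑ i ∈ Finset.Ico (b * q) m,
            F 0 N ((i : ℝ) * (1 / (b:ℝ) ^ (k+1))) (((i : ℝ) + 1) * (1 / (b:ℝ) ^ (k+1))) x := hchain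
        _ ≤ _ := by
            have := add_le_add hIH hsum
            simpa [hS] using this

theorem stmt6 (b : ℕ) (hb : 2 ≤ b) (α : ℝ) (hα : α ∈ Set.Ioo (0 : ℝ) 1)
    (x : ℕ → ℝ) (hx : ∀ j, x j ∈ Set.Ico (0 : ℝ) 1)
    (N k : ℕ) (hN : 1 ≤ N) (hk : 1 ≤ k) :
    F 0 N 0 α x ≤ (N : ℝ) / (b : ℝ) ^ k +
      ∑ h ∈ Finset.Icc 1 k, ((b : ℝ) - 1) *
        ⨆ a : Fin (b ^ h), F 0 N ((a : ℝ) / (b : ℝ) ^ h) (((a : ℝ) + 1) / (b : ℝ) ^ h) x := by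
  obtain ⟨hα0, hα1⟩ := hα
  have hb0 : (0:ℝ) < (b:ℝ) ^ k := by positivity
  set n : ℕ := (⌊α * (b:ℝ) ^ k⌋).toNat with hn
  have hfl : (n : ℝ) = ((⌊α * (b:ℝ) ^ k⌋ : ℤ) : ℝ) := by
    rw [hn]
    exact_mod_cast congrArg (Int.cast : ℤ → ℝ)
      (Int.toNat_of_nonneg (Int.floor_nonneg.mpr (by positivity)))
  have hn1 : (n : ℝ) ≤ α * (b:ℝ) ^ k := by rw [hfl]; exact Int.floor_le _
  have hn2 : α * (b:ℝ) ^ k < (n : ℝ) + 1 := by rw [hfl]; exact Int.lt_floor_add_one _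
  have hn3 : n + 1 ≤ b ^ k := by
    have hfloorlt : (⌊α * (b:ℝ) ^ k⌋ : ℤ) < ((b ^ k : ℕ) : ℤ) := by
      apply Int.floor_lt.mpr
      push_cast
      nlinarith
    have hbk1 : 1 ≤ b ^ k := Nat.one_le_pow _ _ (by omega)
    omega
  have hAle : (n : ℝ) / (b:ℝ) ^ k ≤ α := (div_le_iff₀ hb0).mpr hn1
  have hAlt : α < ((n : ℝ) + 1) / (b:ℝ) ^ k := (lt_div_iff₀ hb0).mpr hn2
  have hkey1 := F_key b hb x N hx k n (by omega)
  have hkey2 := F_key b hb x N hx k (n + 1) hn3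
  push_cast at hkey2
  set S := ∑ h ∈ Finset.Icc 1 k, ((b : ℝ) - 1) *
      ⨆ a : Fin (b ^ h), F 0 N ((a : ℝ) / (b : ℝ) ^ h) (((a : ℝ) + 1) / (b : ℝ) ^ h) x with hSdef
  unfold F at hkey1 hkey2 ⊢
  simp only [sub_zero] at hkey1 hkey2 ⊢
  obtain ⟨h1a, h1b⟩ := abs_le.mp hkey1
  obtain ⟨h2a, h2b⟩ := abs_le.mp hkey2
  have hc1 : (((Finset.Ico 0 (0+N)).filter
        fun j => (0:ℝ) ≤ x j ∧ x j < (n : ℝ) / (b:ℝ) ^ k).card : ℝ)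
      ≤ (((Finset.Ico 0 (0+N)).filter fun j => (0:ℝ) ≤ x j ∧ x j < α).card : ℝ) := by
    apply Nat.cast_le.mpr
    apply Finset.card_le_card
    intro j hj
    simp only [Finset.mem_filter] at hj ⊢
    exact ⟨hj.1, hj.2.1, hj.2.2.trans_le hAle⟩
  have hc2 : (((Finset.Ico 0 (0+N)).filter fun j => (0:ℝ) ≤ x j ∧ x j < α).card : ℝ)
      ≤ (((Finset.Ico 0 (0+N)).filter
        fun j => (0:ℝ) ≤ x j ∧ x j < ((n : ℝ) + 1) / (b:ℝ) ^ k).card : ℝ) := by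
    apply Nat.cast_le.mpr
    apply Finset.card_le_card
    intro j hj
    simp only [Finset.mem_filter] at hj ⊢
    exact ⟨hj.1, hj.2.1, hj.2.2.trans hAlt⟩
  have hNnn : (0:ℝ) ≤ (N : ℝ) := Nat.cast_nonneg N
  have hgap1 : ((n : ℝ) + 1) / (b:ℝ) ^ k - α ≤ 1 / (b:ℝ) ^ k := by
    have he : ((n : ℝ) + 1) / (b:ℝ) ^ k = (n : ℝ) / (b:ℝ) ^ k + 1 / (b:ℝ) ^ k := by ring
    linarith
  have hgap2 : α - (n : ℝ) / (b:ℝ) ^ k ≤ 1 / (b:ℝ) ^ k := by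
    have he : ((n : ℝ) + 1) / (b:ℝ) ^ k = (n : ℝ) / (b:ℝ) ^ k + 1 / (b:ℝ) ^ k := by ring
    linarith
  have hm1 : (((n : ℝ) + 1) / (b:ℝ) ^ k) * N - α * N ≤ (N : ℝ) / (b:ℝ) ^ k := by
    have h := mul_le_mul_of_nonneg_right hgap1 hNnn
    have e1 : (((n : ℝ) + 1) / (b:ℝ) ^ k - α) * N
        = (((n : ℝ) + 1) / (b:ℝ) ^ k) * N - α * N := by ring
    have e2 : (1 / (b:ℝ) ^ k) * N = (N : ℝ) / (b:ℝ) ^ k := by ring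
    linarith
  have hm2 : α * N - ((n : ℝ) / (b:ℝ) ^ k) * N ≤ (N : ℝ) / (b:ℝ) ^ k := by
    have h := mul_le_mul_of_nonneg_right hgap2 hNnn
    have e1 : (α - (n : ℝ) / (b:ℝ) ^ k) * N
        = α * N - ((n : ℝ) / (b:ℝ) ^ k) * N := by ring
    have e2 : (1 / (b:ℝ) ^ k) * N = (N : ℝ) / (b:ℝ) ^ k := by ring
    linarith
  rw [abs_sub_le_iff]
  constructor
  · linarith
  · linarith
end

section
/- Let b ≥ 2 be an integer, let N be a positive integer, let n be the integer with 2^{n−1} < N ≤ 2^n, and let M ≥ 0 be an integer. Then there exist non-negative integers m_1, …, m_n with m_ℓ·2^ℓ + 2^{ℓ−1} ≤ N for ℓ = 1, …, n, such that for every real x, every positive integer h and every integer a with 0 ≤ a < b^h, F(M, N, a·b^{−h}, (a+1)·b^{−h}, ({b^j x})_{j≥0}) ≤ N^{1/2} + Σ_{n/2 ≤ ℓ ≤ n} F(M + m_ℓ·2^ℓ, 2^{ℓ−1}, a·b^{−h}, (a+1)·b^{−h}, ({b^j x})_{j≥0}). -/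
/-!
Write `N = c + 1` with `c < 2^n`. Reading the binary digits of `c` from the top, `[M, M + N)`
splits into consecutive blocks: one of length `2^(ℓ-1)` starting at `M + ⌊c / 2^ℓ⌋ 2^ℓ` for
every set bit `ℓ - 1` of `c` with `ℓ > k`, followed by one of length `c mod 2^k + 1 ≤ 2^k`.
The discrepancy `F` is subadditive along such a splitting and a block of length `L` has
discrepancy at most `L`; stopping at `k = ⌊(n - 1)/2⌋` makes the last block at most `√N` long.
-/

open scoped Classical

open Finset

section Discrepancy

variable (α₁ α₂ : ℝ) (x : ℕ → ℝ)

lemma F_nonneg (M N : ℕ) : 0 ≤ F M N α₁ α₂ x := abs_nonneg _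

lemma F_le_length (M N : ℕ) (h₀ : 0 ≤ α₂ - α₁) (h₁ : α₂ - α₁ ≤ 1) :
    F M N α₁ α₂ x ≤ N := by
  rw [F, abs_le]
  set count := (filter (fun j => α₁ ≤ x j ∧ x j < α₂) (Ico M (M + N))).card
  have hcount : count ≤ N := (card_filter_le _ _).trans (by simp)
  have hexp₀ : 0 ≤ (α₂ - α₁) * N := mul_nonneg h₀ (Nat.cast_nonneg N)
  have hexp₁ : (α₂ - α₁) * N ≤ N := mul_le_of_le_one_left (Nat.cast_nonneg N) h₁
  constructor <;> linarith [(Nat.cast_le (α := ℝ)).mpr hcount, Nat.cast_nonneg (α := ℝ) count]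

lemma F_add_le (M N₁ N₂ : ℕ) :
    F M (N₁ + N₂) α₁ α₂ x ≤ F M N₁ α₁ α₂ x + F (M + N₁) N₂ α₁ α₂ x := by
  have hsplit : Ico M (M + (N₁ + N₂)) = Ico M (M + N₁) ∪ Ico (M + N₁) (M + N₁ + N₂) := by
    rw [Ico_union_Ico_eq_Ico (by omega) (by omega), add_assoc]
  have hdisj := (Ico_disjoint_Ico_consecutive M (M + N₁) (M + N₁ + N₂)).mono
    (filter_subset (fun j => α₁ ≤ x j ∧ x j < α₂) _)
    (filter_subset (fun j => α₁ ≤ x j ∧ x j < α₂) _)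
  unfold F
  rw [hsplit, filter_union, card_union_of_disjoint hdisj, Nat.cast_add, Nat.cast_add]
  exact (congrArg abs (by ring)).trans_le (abs_add_le _ _)

end Discrepancy

lemma F_div_pow_le_length {a b h : ℕ} (ha : a < b ^ h) (x : ℕ → ℝ) (M L : ℕ) :
    F M L ((a : ℝ) / (b : ℝ) ^ h) (((a : ℝ) + 1) / (b : ℝ) ^ h) x ≤ L := by
  have hwidth : ((a : ℝ) + 1) / (b : ℝ) ^ h - (a : ℝ) / (b : ℝ) ^ h = ((b ^ h : ℕ) : ℝ)⁻¹ := by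
    push_cast
    ring
  have hbh : (1 : ℝ) ≤ (b ^ h : ℕ) := Nat.one_le_cast.mpr (by omega)
  exact F_le_length _ _ _ M L (by rw [hwidth]; positivity)
    (by rw [hwidth]; exact inv_le_one_of_one_le₀ hbh)

section DyadicBlocks

/-- If bit `ℓ - 1` of `c` is set, `[0, c]` contains the block `[m 2^ℓ, m 2^ℓ + 2^(ℓ-1))` with
`m = ⌊c / 2^ℓ⌋`; otherwise `m = 0` is a placeholder. -/
def dyadicBlockIndex (c ℓ : ℕ) : ℕ := if c.testBit (ℓ - 1) then c / 2 ^ ℓ else 0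

lemma dyadicBlockIndex_mul_add_le (c ℓ : ℕ) (hℓ : 2 ^ (ℓ - 1) ≤ c + 1) :
    dyadicBlockIndex c ℓ * 2 ^ ℓ + 2 ^ (ℓ - 1) ≤ c + 1 := by
  unfold dyadicBlockIndex
  split_ifs with hbit
  · rcases ℓ.eq_zero_or_pos with rfl | hℓ₀
    · simp
    have hmod : 2 ^ (ℓ - 1) ≤ c % 2 ^ ℓ := Nat.ge_two_pow_of_testBit <| by
      rw [Nat.testBit_mod_two_pow, hbit]
      simp [hℓ₀]
    have := Nat.div_add_mod' c (2 ^ ℓ)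
    omega
  · simpa using hℓ

lemma div_mul_add_digit_mul (c k : ℕ) :
    c / 2 ^ (k + 1) * 2 ^ (k + 1) + 2 ^ k * (c / 2 ^ k % 2) = c / 2 ^ k * 2 ^ k := by
  have hdigit : c / 2 ^ k = 2 * (c / 2 ^ (k + 1)) + c / 2 ^ k % 2 := by
    rw [pow_succ, ← Nat.div_div_eq_div_mul]
    exact (Nat.div_add_mod _ 2).symm
  conv_rhs => rw [hdigit]
  rw [pow_succ]
  ring

variable (α₁ α₂ : ℝ) (x : ℕ → ℝ)

/-- The tail `[⌊c / 2^(k+1)⌋ 2^(k+1), c]` of `[0, c]` is the block of bit `k` (empty if that bit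
is clear) followed by the tail `[⌊c / 2^k⌋ 2^k, c]`. -/
lemma F_tail_le (M c k : ℕ) :
    F (M + c / 2 ^ (k + 1) * 2 ^ (k + 1)) (c % 2 ^ (k + 1) + 1) α₁ α₂ x ≤
      F (M + dyadicBlockIndex c (k + 1) * 2 ^ (k + 1)) (2 ^ k) α₁ α₂ x +
        F (M + c / 2 ^ k * 2 ^ k) (c % 2 ^ k + 1) α₁ α₂ x := by
  have hstart := div_mul_add_digit_mul c k
  have hlen : c % 2 ^ (k + 1) = c % 2 ^ k + 2 ^ k * (c / 2 ^ k % 2) := Nat.mod_pow_succ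
  unfold dyadicBlockIndex
  rw [Nat.add_sub_cancel, Nat.testBit_eq_decide_div_mod_eq]
  rcases Nat.mod_two_eq_zero_or_one (c / 2 ^ k) with hbit | hbit
  · rw [hbit, mul_zero, add_zero] at hstart hlen
    simp only [hbit, zero_ne_one, decide_false, Bool.false_eq_true, if_false]
    rw [hstart, hlen]
    exact le_add_of_nonneg_left (F_nonneg ..)
  · rw [hbit, mul_one] at hstart hlen
    simp only [hbit, decide_true, if_true]
    rw [show c % 2 ^ (k + 1) + 1 = 2 ^ k + (c % 2 ^ k + 1) by omega,
      show M + c / 2 ^ k * 2 ^ k = M + c / 2 ^ (k + 1) * 2 ^ (k + 1) + 2 ^ k by omega]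
    exact F_add_le ..

lemma F_le_sum_dyadicBlocks_add {c n : ℕ} (hc : c < 2 ^ n) (M : ℕ) {k : ℕ} (hk : k ≤ n) :
    F M (c + 1) α₁ α₂ x ≤
      (∑ ℓ ∈ Ioc k n, F (M + dyadicBlockIndex c ℓ * 2 ^ ℓ) (2 ^ (ℓ - 1)) α₁ α₂ x) +
        F (M + c / 2 ^ k * 2 ^ k) (c % 2 ^ k + 1) α₁ α₂ x := by
  induction hk using Nat.decreasingInduction with
  | self => simp [Nat.div_eq_of_lt hc, Nat.mod_eq_of_lt hc]
  | of_succ k hkn ih =>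
    rw [← insert_Ioc_add_one_left_eq_Ioc hkn, sum_insert (by simp), Nat.add_sub_cancel]
    linarith [F_tail_le α₁ α₂ x M c k]

end DyadicBlocks

lemma two_pow_lt_two_mul_of_zpow_sub_one_lt {n N : ℕ} (h : (2 : ℝ) ^ ((n : ℤ) - 1) < N) :
    2 ^ n < 2 * N := by
  have hpow : (2 : ℝ) ^ n = 2 ^ ((n : ℤ) - 1) * 2 := by
    rw [← zpow_natCast, ← zpow_add_one₀ two_ne_zero, sub_add_cancel]
  have : ((2 ^ n : ℕ) : ℝ) < ((2 * N : ℕ) : ℝ) := by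
    push_cast
    linarith
  exact_mod_cast this

lemma sq_two_pow_half_le {n N : ℕ} (h : 2 ^ n < 2 * N) : (2 ^ ((n - 1) / 2)) ^ 2 ≤ N := by
  rw [← pow_mul]
  rcases n.eq_zero_or_pos with rfl | hn
  · simp only [pow_zero] at h
    simp
    omega
  have := Nat.pow_le_pow_right two_pos (show (n - 1) / 2 * 2 + 1 ≤ n by omega)
  rw [pow_succ] at this
  omega

theorem stmt7_general (b : ℕ) (N : ℕ) (n : ℕ)
    (hn1 : (2 : ℝ) ^ ((n : ℤ) - 1) < N) (hn2 : N ≤ 2 ^ n) (M : ℕ) :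
    ∃ m : ℕ → ℕ,
      (∀ ℓ, 1 ≤ ℓ → ℓ ≤ n → m ℓ * 2 ^ ℓ + 2 ^ (ℓ - 1) ≤ N) ∧
      ∀ (x : ℝ) (h : ℕ), 1 ≤ h → ∀ a : ℕ, a < b ^ h →
        F M N ((a : ℝ) / (b : ℝ) ^ h) (((a : ℝ) + 1) / (b : ℝ) ^ h) (bseq b x) ≤
          Real.sqrt N +
            ∑ ℓ ∈ (Finset.Icc 1 n).filter (fun ℓ => n ≤ 2 * ℓ),
              F (M + m ℓ * 2 ^ ℓ) (2 ^ (ℓ - 1))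
                ((a : ℝ) / (b : ℝ) ^ h) (((a : ℝ) + 1) / (b : ℝ) ^ h) (bseq b x) := by
  have hpow := two_pow_lt_two_mul_of_zpow_sub_one_lt hn1
  have hpos := n.one_le_two_pow
  obtain ⟨c, rfl⟩ : ∃ c, N = c + 1 := ⟨N - 1, by omega⟩
  refine ⟨dyadicBlockIndex c, fun ℓ hℓ hℓn => dyadicBlockIndex_mul_add_le c ℓ ?_, ?_⟩
  · have := Nat.pow_le_pow_right two_pos hℓn
    rw [← Nat.sub_add_cancel hℓ, pow_succ] at this
    omega
  intro x h _ a ha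
  set k := (n - 1) / 2
  have hblocks : (Icc 1 n).filter (fun ℓ => n ≤ 2 * ℓ) = Ioc k n := by
    ext ℓ
    simp only [mem_filter, mem_Icc, mem_Ioc]
    omega
  have htail : F (M + c / 2 ^ k * 2 ^ k) (c % 2 ^ k + 1) ((a : ℝ) / (b : ℝ) ^ h)
      (((a : ℝ) + 1) / (b : ℝ) ^ h) (bseq b x) ≤ Real.sqrt (c + 1 : ℕ) := by
    refine (F_div_pow_le_length ha _ _ _).trans ?_
    rw [Real.le_sqrt (by positivity) (by positivity)]
    have hlen : c % 2 ^ k + 1 ≤ 2 ^ k := Nat.mod_lt _ (by positivity)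
    exact_mod_cast (Nat.pow_le_pow_left hlen 2).trans (sq_two_pow_half_le hpow)
  have hc : c < 2 ^ n := by omega
  have hsplit := F_le_sum_dyadicBlocks_add ((a : ℝ) / (b : ℝ) ^ h) (((a : ℝ) + 1) / (b : ℝ) ^ h)
    (bseq b x) hc M (show k ≤ n by omega)
  rw [hblocks]
  linarith

theorem stmt7 (b : ℕ) (hb : 2 ≤ b) (N : ℕ) (hN : 1 ≤ N) (n : ℕ)
    (hn1 : (2 : ℝ) ^ ((n : ℤ) - 1) < N) (hn2 : N ≤ 2 ^ n) (M : ℕ) :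
    ∃ m : ℕ → ℕ,
      (∀ ℓ, 1 ≤ ℓ → ℓ ≤ n → m ℓ * 2 ^ ℓ + 2 ^ (ℓ - 1) ≤ N) ∧
      ∀ (x : ℝ) (h : ℕ), 1 ≤ h → ∀ a : ℕ, a < b ^ h →
        F M N ((a : ℝ) / (b : ℝ) ^ h) (((a : ℝ) + 1) / (b : ℝ) ^ h) (bseq b x) ≤
          Real.sqrt N +
            ∑ ℓ ∈ (Finset.Icc 1 n).filter (fun ℓ => n ≤ 2 * ℓ),
              F (M + m ℓ * 2 ^ ℓ) (2 ^ (ℓ - 1))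
                ((a : ℝ) / (b : ℝ) ^ h) (((a : ℝ) + 1) / (b : ℝ) ^ h) (bseq b x) :=
  stmt7_general b N n hn1 hn2 M
end

section
/- Let b ≥ 2 be an integer, let j_0 be a positive integer, and let B = [u·b^{−j_0}, v·b^{−j_0}) with integers 0 ≤ u ≤ v ≤ b^{j_0} (an interval whose endpoints are integer multiples of b^{−j_0}). Then for all integers M ≥ 0, N ≥ 1, h ≥ 1, a with 0 ≤ a < b^h and every real t, μ({x ∈ B : F(M + j_0, N, a·b^{−h}, (a+1)·b^{−h}, ({b^j x})_{j≥0}) > t}) = μ(B) · μ({x ∈ (0,1) : F(M, N, a·b^{−h}, (a+1)·b^{−h}, ({b^j x})_{j≥0}) > t}). -/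
open scoped Classical

open MeasureTheory Set

lemma bseq_fract (b j₀ : ℕ) (x : ℝ) (j : ℕ) :
    bseq b (Int.fract ((b:ℝ)^j₀ * x)) j = bseq b x (j + j₀) := by
  have h : (b:ℝ)^j * Int.fract ((b:ℝ)^j₀ * x)
      = (b:ℝ)^(j+j₀) * x - (((b^j : ℕ) : ℤ) * ⌊(b:ℝ)^j₀ * x⌋ : ℤ) := by
    rw [Int.fract]; push_cast; ring
  simp only [bseq, h, Int.fract_sub_intCast]

lemma F_shift (M N j₀ : ℕ) (α₁ α₂ : ℝ) (x : ℕ → ℝ) :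
    F (M + j₀) N α₁ α₂ x = F M N α₁ α₂ (fun j => x (j + j₀)) := by
  unfold F
  congr 2
  have : (Finset.Ico (M+j₀) (M+j₀+N)).filter (fun j => α₁ ≤ x j ∧ x j < α₂)
      = ((Finset.Ico M (M+N)).filter (fun j => α₁ ≤ x (j+j₀) ∧ x (j+j₀) < α₂)).image (· + j₀) := by
    ext k
    simp only [Finset.mem_filter, Finset.mem_image, Finset.mem_Ico]
    constructor
    · rintro ⟨⟨h1, h2⟩, hp⟩
      refine ⟨k - j₀, ⟨⟨by omega, by omega⟩, ?_⟩, by omega⟩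
      rwa [Nat.sub_add_cancel (by omega)]
    · rintro ⟨m, ⟨⟨h1, h2⟩, hp⟩, rfl⟩
      exact ⟨⟨by omega, by omega⟩, hp⟩
  rw [this, Finset.card_image_of_injective _ (add_left_injective j₀)]

lemma measurable_Fb (b M N : ℕ) (α₁ α₂ : ℝ) :
    Measurable fun y : ℝ => F M N α₁ α₂ (bseq b y) := by
  unfold F bseq
  apply Measurable.abs
  apply Measurable.sub _ measurable_const
  have key : ∀ y : ℝ,
      (((Finset.Ico M (M+N)).filter fun j => α₁ ≤ Int.fract ((b:ℝ)^j*y) ∧ Int.fract ((b:ℝ)^j*y) < α₂).card : ℝ)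
      = ∑ j ∈ Finset.Ico M (M+N),
          if α₁ ≤ Int.fract ((b:ℝ)^j*y) ∧ Int.fract ((b:ℝ)^j*y) < α₂ then (1:ℝ) else 0 := by
    intro y
    rw [Finset.card_filter]
    push_cast
    rfl
  simp only [key]
  apply Finset.measurable_sum
  intro j _
  apply Measurable.ite _ measurable_const measurable_const
  have hm : Measurable fun y : ℝ => Int.fract ((b:ℝ)^j * y) := (measurable_const_mul _).fract
  have : {a : ℝ | α₁ ≤ Int.fract ((b:ℝ)^j*a) ∧ Int.fract ((b:ℝ)^j*a) < α₂}
      = {a : ℝ | α₁ ≤ Int.fract ((b:ℝ)^j*a)} ∩ {a : ℝ | Int.fract ((b:ℝ)^j*a) < α₂} := rfl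
  rw [this]
  exact (measurableSet_le measurable_const hm).inter (measurableSet_lt hm measurable_const)

lemma key_measure (b j₀ u v : ℕ) (hb : 2 ≤ b) (huv : u ≤ v) (S : Set ℝ) (hS : MeasurableSet S) :
    volume {x ∈ Set.Ico ((u:ℝ)/(b:ℝ)^j₀) ((v:ℝ)/(b:ℝ)^j₀) | Int.fract ((b:ℝ)^j₀ * x) ∈ S} =
    volume (Set.Ico ((u:ℝ)/(b:ℝ)^j₀) ((v:ℝ)/(b:ℝ)^j₀)) * volume (S ∩ Set.Ico 0 1) := by
  set c : ℝ := (b:ℝ)^j₀ with hc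
  have hc0 : (0:ℝ) < c := by positivity
  have hdecomp : {x ∈ Set.Ico ((u:ℝ)/c) ((v:ℝ)/c) | Int.fract (c * x) ∈ S}
      = ⋃ k ∈ Finset.Ico u v, (fun x : ℝ => c * x - (k:ℝ)) ⁻¹' (S ∩ Set.Ico 0 1) := by
    ext x
    simp only [Set.mem_setOf_eq, Set.mem_Ico, Set.mem_iUnion, Set.mem_preimage,
      Set.mem_inter_iff, Finset.mem_Ico, exists_prop]
    constructor
    · rintro ⟨⟨h1, h2⟩, hmem⟩
      have hux : (u:ℝ) ≤ c * x := by
        rw [div_le_iff₀ hc0] at h1; linarith [h1]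
      have hxv : c * x < (v:ℝ) := by
        rw [lt_div_iff₀ hc0] at h2; linarith [h2]
      set n : ℤ := ⌊c * x⌋ with hn
      have hn0 : (u:ℤ) ≤ n := Int.le_floor.2 (by exact_mod_cast hux)
      have hnv : n < (v:ℤ) := by
        have : (n:ℝ) ≤ c * x := Int.floor_le _
        exact_mod_cast lt_of_le_of_lt this hxv
      have hnn : (0:ℤ) ≤ n := le_trans (Int.ofNat_nonneg u) hn0
      have hcast : ((n.toNat : ℕ) : ℝ) = ((n : ℤ) : ℝ) := by
        exact_mod_cast congrArg (Int.cast : ℤ → ℝ) (Int.toNat_of_nonneg hnn)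
      have he : c * x - (n.toNat : ℝ) = Int.fract (c * x) := by
        rw [Int.fract, hcast]
      refine ⟨n.toNat, ⟨by omega, by omega⟩, ?_, ?_, ?_⟩
      · rw [he]; exact hmem
      · have := Int.fract_nonneg (c * x); linarith
      · have := Int.fract_lt_one (c * x); linarith
    · rintro ⟨k, ⟨hk1, hk2⟩, hmemS, h0, h1⟩
      have hfr : Int.fract (c * x) = c * x - (k:ℝ) := by
        have : Int.fract (c * x) = Int.fract (c * x - ((k:ℤ):ℝ)) := (Int.fract_sub_intCast _ _).symm
        rw [this]
        push_cast
        exact Int.fract_eq_self.2 ⟨h0, h1⟩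
      refine ⟨⟨?_, ?_⟩, by rwa [hfr]⟩
      · rw [div_le_iff₀ hc0]
        have : (u:ℝ) ≤ (k:ℝ) := by exact_mod_cast hk1
        linarith
      · rw [lt_div_iff₀ hc0]
        have : (k:ℝ) + 1 ≤ (v:ℝ) := by exact_mod_cast hk2
        linarith
  rw [hdecomp]
  have hmeas : ∀ k : ℕ, MeasurableSet ((fun x : ℝ => c * x - (k:ℝ)) ⁻¹' (S ∩ Set.Ico 0 1)) := by
    intro k
    exact ((measurable_const_mul c).sub measurable_const) (hS.inter measurableSet_Ico)
  have hdisj : (Finset.Ico u v : Set ℕ).PairwiseDisjoint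
      (fun k : ℕ => (fun x : ℝ => c * x - (k:ℝ)) ⁻¹' (S ∩ Set.Ico 0 1)) := by
    intro k _ l _ hkl
    apply Set.disjoint_left.2
    rintro x ⟨_, h0k, h1k⟩ ⟨_, h0l, h1l⟩
    dsimp only at h0k h1k h0l h1l
    rcases lt_or_gt_of_ne hkl with h | h
    · have : (k:ℝ) + 1 ≤ (l:ℝ) := by exact_mod_cast h
      linarith
    · have : (l:ℝ) + 1 ≤ (k:ℝ) := by exact_mod_cast h
      linarith
  rw [measure_biUnion_finset hdisj (fun k _ => hmeas k)]
  have hterm : ∀ k : ℕ, volume ((fun x : ℝ => c * x - (k:ℝ)) ⁻¹' (S ∩ Set.Ico 0 1))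
      = ENNReal.ofReal c⁻¹ * volume (S ∩ Set.Ico 0 1) := by
    intro k
    have : (fun x : ℝ => c * x - (k:ℝ)) ⁻¹' (S ∩ Set.Ico 0 1)
        = (fun x : ℝ => c * x) ⁻¹' ((fun y : ℝ => y + (-(k:ℝ))) ⁻¹' (S ∩ Set.Ico 0 1)) := by
      ext x; simp [sub_eq_add_neg]
    rw [this, Real.volume_preimage_mul_left (ne_of_gt hc0),
      measure_preimage_add_right volume _ _, abs_of_pos (inv_pos.2 hc0)]
  simp only [hterm, Finset.sum_const, Nat.card_Ico, nsmul_eq_mul]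
  rw [Real.volume_Ico, ← mul_assoc]
  congr 1
  rw [← ENNReal.ofReal_natCast (v - u), ← ENNReal.ofReal_mul (by positivity)]
  congr 1
  rw [Nat.cast_sub huv]
  field_simp

theorem stmt10 (b : ℕ) (hb : 2 ≤ b) (j₀ : ℕ) (hj₀ : 1 ≤ j₀)
    (u v : ℕ) (huv : u ≤ v) (hv : v ≤ b ^ j₀)
    (M N h a : ℕ) (hN : 1 ≤ N) (hh : 1 ≤ h) (ha : a < b ^ h) (t : ℝ) :
    MeasureTheory.volume {x ∈ Set.Ico ((u : ℝ) / (b : ℝ) ^ j₀) ((v : ℝ) / (b : ℝ) ^ j₀) |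
        t < F (M + j₀) N ((a : ℝ) / (b : ℝ) ^ h) (((a : ℝ) + 1) / (b : ℝ) ^ h) (bseq b x)} =
      MeasureTheory.volume (Set.Ico ((u : ℝ) / (b : ℝ) ^ j₀) ((v : ℝ) / (b : ℝ) ^ j₀)) *
        MeasureTheory.volume {x ∈ Set.Ioo (0 : ℝ) 1 |
          t < F M N ((a : ℝ) / (b : ℝ) ^ h) (((a : ℝ) + 1) / (b : ℝ) ^ h) (bseq b x)} := by
  set α₁ : ℝ := (a : ℝ) / (b : ℝ) ^ h
  set α₂ : ℝ := ((a : ℝ) + 1) / (b : ℝ) ^ h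
  set S : Set ℝ := {y | t < F M N α₁ α₂ (bseq b y)} with hSdef
  have hS : MeasurableSet S :=
    measurableSet_lt measurable_const (measurable_Fb b M N α₁ α₂)
  have hpt : ∀ x : ℝ, F (M + j₀) N α₁ α₂ (bseq b x)
      = F M N α₁ α₂ (bseq b (Int.fract ((b:ℝ)^j₀ * x))) := by
    intro x
    rw [F_shift]
    congr 1
    funext j
    exact (bseq_fract b j₀ x j).symm
  have hset : {x ∈ Set.Ico ((u : ℝ) / (b : ℝ) ^ j₀) ((v : ℝ) / (b : ℝ) ^ j₀) |
      t < F (M + j₀) N α₁ α₂ (bseq b x)}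
      = {x ∈ Set.Ico ((u : ℝ) / (b : ℝ) ^ j₀) ((v : ℝ) / (b : ℝ) ^ j₀) |
          Int.fract ((b:ℝ)^j₀ * x) ∈ S} := by
    ext x
    simp only [Set.mem_setOf_eq, hpt, hSdef]
  rw [hset, key_measure b j₀ u v hb huv S hS]
  congr 1
  have h1 : {x ∈ Set.Ioo (0:ℝ) 1 | t < F M N α₁ α₂ (bseq b x)} = S ∩ Set.Ioo 0 1 := by
    ext x; simp only [Set.mem_setOf_eq, Set.mem_inter_iff, hSdef]; tauto
  rw [h1]
  apply measure_congr
  exact (Filter.EventuallyEq.refl _ _).inter Ioo_ae_eq_Ico.symm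
end
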